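/- arXiv:0712.3146 — 2 statements merged into one kernel-verified Lean document; each statement's English description precedes it below -/
import Mathlib

section
/- (MultGainConn) In the dynamic epistemic logic axiomatization of the muddy children puzzle, for all natural numbers c ≥ 1 and all j ≥ 1: ⊢ E_G^{c+1} λ_j → [*] E_G^{c} λ_{j+1}, where E_G^n denotes n-fold iterated shared knowledge. -/
/-- Formulas of dynamic epistemic logic with common knowledge. -/
inductive Form (Atom Agent Event : Type) : Type
  | atom : Atom → Form Atom Agent Event
  | tru  : Form Atom Agent Event
  | imp  : Form Atom Agent Event → Form Atom Agent Event → Form Atom Agent Event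
  | and  : Form Atom Agent Event → Form Atom Agent Event → Form Atom Agent Event
  | or   : Form Atom Agent Event → Form Atom Agent Event → Form Atom Agent Event
  | not  : Form Atom Agent Event → Form Atom Agent Event
  | K    : Agent → Form Atom Agent Event → Form Atom Agent Event
  | C    : List Agent → Form Atom Agent Event → Form Atom Agent Event
  | E    : List Agent → Form Atom Agent Event → Form Atom Agent Event
  | box  : Event → Form Atom Agent Event → Form Atom Agent Event

namespace Form

variable {Atom Agent Event : Type}

def iff (p q : Form Atom Agent Event) : Form Atom Agent Event :=
  Form.and (Form.imp p q) (Form.imp q p)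

/-- The conjunction ⋀_{i ∈ G} K_i p. -/
def conjK (G : List Agent) (p : Form Atom Agent Event) : Form Atom Agent Event :=
  match G with
  | [] => Form.tru
  | i :: G' => Form.and (Form.K i p) (conjK G' p)

/-- Classical boolean evaluation, treating atoms and modal subformulas as opaque
(evaluated by the valuation `v`).  A formula is a classical tautology iff it
evaluates to `true` under every such valuation. -/
def evalC (v : Form Atom Agent Event → Bool) : Form Atom Agent Event → Bool
  | Form.tru => true
  | Form.imp p q => !(evalC v p) || evalC v q
  | Form.and p q => evalC v p && evalC v q
  | Form.or p q => evalC v p || evalC v q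
  | Form.not p => !(evalC v p)
  | p => v p

/-- Hilbert-style derivability for the system 𝒯^{C[α]}_G, with an extra set `Ax`
of proper axioms. -/
inductive Prf (Ax : Form Atom Agent Event → Prop) : Form Atom Agent Event → Prop
  | ax {p} : Ax p → Prf Ax p
  | taut {p} : (∀ v, evalC v p = true) → Prf Ax p
  | mp {p q} : Prf Ax p → Prf Ax (Form.imp p q) → Prf Ax q
  | kK (i : Agent) (p q : Form Atom Agent Event) :
      Prf Ax (Form.imp (Form.K i p) (Form.imp (Form.K i (Form.imp p q)) (Form.K i q)))
  | tK (i : Agent) (p : Form Atom Agent Event) : Prf Ax (Form.imp (Form.K i p) p)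
  | genK (i : Agent) {p} : Prf Ax p → Prf Ax (Form.K i p)
  | kBox (a : Event) (p q : Form Atom Agent Event) :
      Prf Ax (Form.imp (Form.box a p) (Form.imp (Form.box a (Form.imp p q)) (Form.box a q)))
  | tBox (a : Event) (p : Form Atom Agent Event) : Prf Ax (Form.imp (Form.box a p) p)
  | genBox (a : Event) {p} : Prf Ax p → Prf Ax (Form.box a p)
  | defE (G : List Agent) (p : Form Atom Agent Event) :
      Prf Ax (Form.iff (Form.E G p) (Form.conjK G p))
  | fixC (G : List Agent) (p : Form Atom Agent Event) :
      Prf Ax (Form.imp (Form.C G p) (Form.and p (Form.E G (Form.C G p))))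
  | gfpC {G : List Agent} {p r : Form Atom Agent Event} :
      Prf Ax (Form.imp r (Form.and p (Form.E G r))) → Prf Ax (Form.imp r (Form.C G p))
  | kt1 (i : Agent) (a : Event) (p : Form Atom Agent Event) :
      Prf Ax (Form.imp (Form.K i (Form.box a p)) (Form.box a (Form.K i p)))

/-- n-fold iterated shared knowledge E_G^n. -/
def iterE (G : List Agent) : ℕ → Form Atom Agent Event → Form Atom Agent Event
  | 0, p => p
  | n+1, p => Form.E G (iterE G n p)

/-- k-fold iterated dynamic modality [α]^k. -/
def iterBox (a : Event) : ℕ → Form Atom Agent Event → Form Atom Agent Event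
  | 0, p => p
  | n+1, p => Form.box a (iterBox a n p)

end Form

/-- The empty set of proper axioms. -/
def NoAx {Atom Agent Event : Type} : Form Atom Agent Event → Prop := fun _ => False

/-- Atomic propositions of the muddy children puzzle. -/
inductive MCAtom : Type
  | lam : ℕ → MCAtom   -- at least j children are muddy
  | eps : ℕ → MCAtom   -- exactly j children are muddy
  | mu  : ℕ → MCAtom   -- child i is muddy

abbrev MForm (Event : Type) := Form MCAtom ℕ Event

def lam {Event : Type} (j : ℕ) : MForm Event := Form.atom (MCAtom.lam j)
def eps {Event : Type} (j : ℕ) : MForm Event := Form.atom (MCAtom.eps j)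
def mud {Event : Type} (i : ℕ) : MForm Event := Form.atom (MCAtom.mu i)

/-!
Both shared knowledge `E_G` and the composite `[*] E_G` are normal modalities, and `E_G`
commutes with `[*]` (axiom KT1, agent by agent). For `c = 1`: from `E_G E_G λ_j`, truth of
shared knowledge and persistence give `[*] E_G λ_j`, while MC2 gives `[*] E_G ¬ε_j`; since
`λ_j → ¬ε_j → λ_{j+1}` is a consequence of EQ_λε, normality of `[*] E_G` yields
`[*] E_G λ_{j+1}`. The step from `c` to `c + 1` applies `E_G` to the induction hypothesis and
pushes it inside `[*]`.
-/

namespace Form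

variable {Atom Agent Event : Type} {Ax : Form Atom Agent Event → Prop}
  {a b c p q r x : Form Atom Agent Event}

-- Each propositional step is one instance of `Prf.taut`, whose truth table `grind` checks.
namespace Prf

theorem mp₂ (ha : Prf Ax a) (hb : Prf Ax b) (h : Prf Ax (imp a (imp b c))) : Prf Ax c :=
  .mp hb (.mp ha h)

theorem imp_trans (hab : Prf Ax (imp a b)) (hbc : Prf Ax (imp b c)) : Prf Ax (imp a c) :=
  mp₂ hab hbc (.taut fun _ => by grind [evalC])

theorem imp_of_prf (h : Prf Ax b) : Prf Ax (imp a b) :=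
  .mp h (.taut fun _ => by grind [evalC])

theorem imp_swap (h : Prf Ax (imp a (imp b c))) : Prf Ax (imp b (imp a c)) :=
  .mp h (.taut fun _ => by grind [evalC])

theorem iff_mp (h : Prf Ax (iff a b)) : Prf Ax (imp a b) :=
  .mp h (.taut fun _ => by grind [evalC, Form.iff])

theorem iff_mpr (h : Prf Ax (iff a b)) : Prf Ax (imp b a) :=
  .mp h (.taut fun _ => by grind [evalC, Form.iff])

theorem and_intro (ha : Prf Ax a) (hb : Prf Ax b) : Prf Ax (and a b) :=
  mp₂ ha hb (.taut fun _ => by grind [evalC])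

theorem imp_of_imp_of_imp₂ (ha : Prf Ax (imp x a)) (hb : Prf Ax (imp x b))
    (h : Prf Ax (imp a (imp b c))) : Prf Ax (imp x c) :=
  .mp h (mp₂ ha hb (.taut fun _ => by grind [evalC]))

end Prf

structure IsNormal (Ax : Form Atom Agent Event → Prop)
    (M : Form Atom Agent Event → Form Atom Agent Event) : Prop where
  k : ∀ p q, Prf Ax (imp (M p) (imp (M (imp p q)) (M q)))
  nec : ∀ {p}, Prf Ax p → Prf Ax (M p)

namespace IsNormal

variable {M N : Form Atom Agent Event → Form Atom Agent Event}

theorem mono (hM : IsNormal Ax M) (h : Prf Ax (imp p q)) : Prf Ax (imp (M p) (M q)) :=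
  .mp (hM.nec h) (.imp_swap (hM.k p q))

theorem mono₂ (hM : IsNormal Ax M) (h : Prf Ax (imp p (imp q r))) :
    Prf Ax (imp (M p) (imp (M q) (M r))) :=
  .imp_trans (hM.mono h) (.imp_swap (hM.k q r))

theorem comp (hM : IsNormal Ax M) (hN : IsNormal Ax N) : IsNormal Ax (fun p => M (N p)) where
  k p q := hM.mono₂ (hN.k p q)
  nec h := hM.nec (hN.nec h)

theorem and (hM : IsNormal Ax M) (hN : IsNormal Ax N) :
    IsNormal Ax (fun p => Form.and (M p) (N p)) where
  k p q := .mp₂ (hM.k p q) (hN.k p q) (.taut fun _ => by grind [evalC])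
  nec h := .and_intro (hM.nec h) (hN.nec h)

theorem of_iff (hM : IsNormal Ax M) (hNM : ∀ p, Prf Ax (iff (N p) (M p))) : IsNormal Ax N where
  k p q := .mp (hNM q).iff_mpr <| .mp (hM.k p q) <| .mp (hNM (imp p q)).iff_mp <|
    .mp (hNM p).iff_mp (.taut fun _ => by grind [evalC])
  nec h := .mp (hM.nec h) (hNM _).iff_mpr

end IsNormal

theorem isNormal_K (i : Agent) : IsNormal Ax (K i) := ⟨Prf.kK i, Prf.genK i⟩

theorem isNormal_box (α : Event) : IsNormal Ax (box α) := ⟨Prf.kBox α, Prf.genBox α⟩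

theorem isNormal_conjK (G : List Agent) : IsNormal Ax (conjK G) := by
  induction G with
  | nil => exact ⟨fun _ _ => .taut fun _ => by grind [evalC, conjK], fun _ => .taut fun _ => rfl⟩
  | cons i G ih => exact (isNormal_K i).and ih

theorem isNormal_E (G : List Agent) : IsNormal Ax (E G) :=
  (isNormal_conjK G).of_iff (Prf.defE G)

theorem conjK_box_imp_box_conjK (G : List Agent) (α : Event) (p : Form Atom Agent Event) :
    Prf Ax (imp (conjK G (box α p)) (box α (conjK G p))) := by
  induction G with
  | nil => exact .imp_of_prf ((isNormal_box α).nec (.taut fun _ => rfl))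
  | cons i G ih =>
    exact .imp_of_imp_of_imp₂
      (.imp_trans (.taut fun _ => by grind [evalC, conjK]) (Prf.kt1 i α p))
      (.imp_trans (.taut fun _ => by grind [evalC, conjK]) ih)
      ((isNormal_box α).mono₂ (.taut fun _ => by grind [evalC, conjK]))

theorem E_box_imp_box_E (G : List Agent) (α : Event) (p : Form Atom Agent Event) :
    Prf Ax (imp (E G (box α p)) (box α (E G p))) :=
  .imp_trans (Prf.defE G _).iff_mp <| .imp_trans (conjK_box_imp_box_conjK G α p) <|
    (isNormal_box α).mono (Prf.defE G p).iff_mpr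

theorem E_imp_self {G : List Agent} (hG : G ≠ []) (p : Form Atom Agent Event) :
    Prf Ax (imp (E G p) p) := by
  obtain ⟨i, G, rfl⟩ := List.exists_cons_of_ne_nil hG
  exact .imp_trans (Prf.defE _ p).iff_mp
    (.imp_trans (.taut fun _ => by grind [evalC, conjK]) (Prf.tK i p))

end Form

/-- (MultGainConn) ⊢ E_G^{c+1} λ_j → [*] E_G^c λ_{j+1} for c ≥ 1 and j ≥ 1. -/
theorem multGainConn {Event : Type} (Ax : MForm Event → Prop)
    (G : List ℕ) (hG : G ≠ []) (st : Event)
    (hMC2 : ∀ j : ℕ, 1 ≤ j →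
      Form.Prf Ax (Form.imp (Form.E G (Form.E G (lam j)))
        (Form.box st (Form.E G (Form.not (eps j))))))
    (hPers : ∀ j : ℕ, Form.Prf Ax (Form.imp (lam j) (Form.box st (lam j))))
    (hEQ : ∀ j : ℕ, Form.Prf Ax (Form.iff (eps j) (Form.and (lam j) (Form.not (lam (j+1)))))) :
    ∀ c : ℕ, 1 ≤ c → ∀ j : ℕ, 1 ≤ j →
      Form.Prf Ax (Form.imp (Form.iterE G (c+1) (lam j))
        (Form.box st (Form.iterE G c (lam (j+1))))) := by
  intro c hc
  induction c, hc using Nat.le_induction with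
  | base =>
    intro j hj
    have box_E_lam :
        Form.Prf Ax (Form.imp (Form.E G (Form.E G (lam j))) (Form.box st (Form.E G (lam j)))) :=
      .imp_trans (Form.E_imp_self hG _) <|
        .imp_trans ((Form.isNormal_E G).mono (hPers j)) (Form.E_box_imp_box_E G st (lam j))
    have gain : Form.Prf Ax (Form.imp (lam j) (Form.imp (Form.not (eps j)) (lam (j + 1)))) :=
      .mp (hEQ j).iff_mpr (.taut fun _ => by grind [Form.evalC])
    exact .imp_of_imp_of_imp₂ box_E_lam (hMC2 j hj)
      (((Form.isNormal_box st).comp (Form.isNormal_E G)).mono₂ gain)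
  | succ c _ ih =>
    intro j hj
    exact .imp_trans ((Form.isNormal_E G).mono (ih j hj)) (Form.E_box_imp_box_E G st _)
end

section
/- (Concl, the Muddy Children Theorem) In the full muddy children axiomatization with m+1 muddy children, for every agent i in the group G: ⊢ [¤] TRUE → [*]^m (μ_i → K_i μ_i), i.e., after Father's initial announcement and m repetitions of his injunction, every muddy child knows it is muddy. -/
/-!
The announcement makes λ₁ common knowledge, hence in particular E_G^{m+1} λ₁. An injunction
after which nobody steps forward makes everyone know ¬ε_j, and ¬ε_j together with λ_j gives
λ_{j+1}; since λ_j persists, one injunction trades a level of shared knowledge for one more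
muddy child: E_G^{n+2} λ_j → [*] E_G^{n+1} λ_{j+1}. After m injunctions everyone knows
λ_{m+1}, so a muddy child, who knows ε_m ∨ ε_{m+1}, knows ε_{m+1} and by MC3 knows it is muddy.
-/

namespace Form.Prf

variable {Atom Agent Event : Type} {Ax : Form Atom Agent Event → Prop}
  {p q r : Form Atom Agent Event}

theorem tru_intro : Prf Ax (Form.tru : Form Atom Agent Event) :=
  taut fun _ => rfl

theorem imp_refl (p : Form Atom Agent Event) : Prf Ax (p.imp p) :=
  taut fun v => by simp only [evalC]; grind

theorem imp_intro (h : Prf Ax q) : Prf Ax (p.imp q) :=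
  mp h (taut fun v => by simp only [evalC]; grind)

theorem trans (hpq : Prf Ax (p.imp q)) (hqr : Prf Ax (q.imp r)) : Prf Ax (p.imp r) :=
  mp hqr (mp hpq (taut fun v => by simp only [evalC]; grind))

theorem imp_comm (h : Prf Ax (p.imp (q.imp r))) : Prf Ax (q.imp (p.imp r)) :=
  mp h (taut fun v => by simp only [evalC]; grind)

theorem mp_under (h : Prf Ax (r.imp (p.imp q))) (hp : Prf Ax (r.imp p)) : Prf Ax (r.imp q) :=
  mp hp (mp h (taut fun v => by simp only [evalC]; grind))

theorem mp₂_under {a b c : Form Atom Agent Event} (ha : Prf Ax (r.imp a))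
    (hb : Prf Ax (r.imp b)) (h : Prf Ax (a.imp (b.imp c))) : Prf Ax (r.imp c) :=
  mp_under (ha.trans h) hb

theorem imp_imp_imp {a b c d : Form Atom Agent Event} (hca : Prf Ax (c.imp a))
    (hbd : Prf Ax (b.imp d)) : Prf Ax ((a.imp b).imp (c.imp d)) :=
  mp hbd (mp hca (taut fun v => by simp only [evalC]; grind))

theorem imp_imp_under {c d f g : Form Atom Agent Event} (hdf : Prf Ax (r.imp (d.imp f)))
    (hcfg : Prf Ax (c.imp (f.imp g))) : Prf Ax (r.imp ((c.imp d).imp (c.imp g))) :=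
  mp hcfg (mp hdf (taut fun v => by simp only [evalC]; grind))

theorem and_left (p q : Form Atom Agent Event) : Prf Ax ((p.and q).imp p) :=
  taut fun v => by simp only [evalC]; grind

theorem and_right (p q : Form Atom Agent Event) : Prf Ax ((p.and q).imp q) :=
  taut fun v => by simp only [evalC]; grind

theorem and_intro_s13 (p q : Form Atom Agent Event) : Prf Ax (p.imp (q.imp (p.and q))) :=
  taut fun v => by simp only [evalC]; grind

theorem imp_uncurry (h : Prf Ax (p.imp (q.imp r))) : Prf Ax ((p.and q).imp r) :=
  mp h (taut fun v => by simp only [evalC]; grind)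

theorem and_mono {p' q' : Form Atom Agent Event} (hp : Prf Ax (p.imp p'))
    (hq : Prf Ax (q.imp q')) : Prf Ax ((p.and q).imp (p'.and q')) :=
  mp hq (mp hp (taut fun v => by simp only [evalC]; grind))

theorem and_mono₂ {a b c d e f : Form Atom Agent Event}
    (h₁ : Prf Ax (a.imp (c.imp e))) (h₂ : Prf Ax (b.imp (d.imp f))) :
    Prf Ax ((a.and b).imp ((c.and d).imp (e.and f))) :=
  mp h₂ (mp h₁ (taut fun v => by simp only [evalC]; grind))

theorem iff_mp_s13 (h : Prf Ax (p.iff q)) : Prf Ax (p.imp q) :=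
  mp h (taut fun v => by simp only [Form.iff, evalC]; grind)

theorem iff_mpr_s13 (h : Prf Ax (p.iff q)) : Prf Ax (q.imp p) :=
  mp h (taut fun v => by simp only [Form.iff, evalC]; grind)

theorem not_imp_imp_of_and_not_imp (h : Prf Ax ((p.and q.not).imp r)) :
    Prf Ax (r.not.imp (p.imp q)) :=
  mp h (taut fun v => by simp only [evalC]; grind)

theorem resolve_left_of_imp_not (h : Prf Ax (p.imp q.not)) :
    Prf Ax (q.imp ((p.or r).imp r)) :=
  mp h (taut fun v => by simp only [evalC]; grind)

theorem K_mono (i : Agent) (h : Prf Ax (p.imp q)) : Prf Ax ((K i p).imp (K i q)) :=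
  mp_under (kK i p q) (imp_intro (genK i h))

theorem K_mono₂ (i : Agent) (h : Prf Ax (p.imp (q.imp r))) :
    Prf Ax ((K i p).imp ((K i q).imp (K i r))) :=
  (K_mono i h).trans (imp_comm (kK i q r))

theorem box_mono (a : Event) (h : Prf Ax (p.imp q)) : Prf Ax ((box a p).imp (box a q)) :=
  mp_under (kBox a p q) (imp_intro (genBox a h))

theorem box_mono₂ (a : Event) (h : Prf Ax (p.imp (q.imp r))) :
    Prf Ax ((box a p).imp ((box a q).imp (box a r))) :=
  (box_mono a h).trans (imp_comm (kBox a q r))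

theorem box_and (a : Event) : Prf Ax (((box a p).and (box a q)).imp (box a (p.and q))) :=
  imp_uncurry (box_mono₂ a (and_intro_s13 p q))

theorem conjK_mono (h : Prf Ax (p.imp q)) :
    ∀ G : List Agent, Prf Ax ((conjK G p).imp (conjK G q))
  | [] => imp_refl _
  | i :: G => and_mono (K_mono i h) (conjK_mono h G)

theorem conjK_mono₂ (h : Prf Ax (p.imp (q.imp r))) :
    ∀ G : List Agent, Prf Ax ((conjK G p).imp ((conjK G q).imp (conjK G r)))
  | [] => imp_intro (imp_intro tru_intro)
  | i :: G => and_mono₂ (K_mono₂ i h) (conjK_mono₂ h G)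

theorem conjK_box (a : Event) :
    ∀ G : List Agent, Prf Ax ((conjK G (box a p)).imp (box a (conjK G p)))
  | [] => imp_intro (genBox a tru_intro)
  | i :: G => (and_mono (kt1 i a p) (conjK_box a G)).trans (box_and a)

theorem conjK_imp_K {i : Agent} : ∀ {G : List Agent}, i ∈ G → Prf Ax ((conjK G p).imp (K i p))
  | _ :: _, List.Mem.head _ => and_left _ _
  | _ :: _, List.Mem.tail _ hi => (and_right _ _).trans (conjK_imp_K hi)

variable {G : List Agent}

theorem E_imp_conjK : Prf Ax ((E G p).imp (conjK G p)) :=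
  iff_mp_s13 (defE G p)

theorem conjK_imp_E : Prf Ax ((conjK G p).imp (E G p)) :=
  iff_mpr_s13 (defE G p)

theorem E_mono (h : Prf Ax (p.imp q)) : Prf Ax ((E G p).imp (E G q)) :=
  E_imp_conjK.trans ((conjK_mono h G).trans conjK_imp_E)

theorem E_mono₂ (h : Prf Ax (p.imp (q.imp r))) : Prf Ax ((E G p).imp ((E G q).imp (E G r))) :=
  (E_imp_conjK.trans (conjK_mono₂ h G)).trans (imp_imp_imp E_imp_conjK conjK_imp_E)

theorem E_box (a : Event) : Prf Ax ((E G (box a p)).imp (box a (E G p))) :=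
  E_imp_conjK.trans ((conjK_box a G).trans (box_mono a conjK_imp_E))

theorem E_imp_K {i : Agent} (hi : i ∈ G) : Prf Ax ((E G p).imp (K i p)) :=
  E_imp_conjK.trans (conjK_imp_K hi)

theorem E_imp_self (hG : G ≠ []) : Prf Ax ((E G p).imp p) := by
  obtain ⟨i, hi⟩ := List.exists_mem_of_ne_nil G hG
  exact (E_imp_K hi).trans (tK i p)

theorem iterE_succ' (n : ℕ) (p : Form Atom Agent Event) :
    iterE G (n + 1) p = iterE G n (E G p) := by
  induction n with
  | zero => rfl
  | succ n ih => exact congrArg (E G) ih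

theorem iterE_mono (h : Prf Ax (p.imp q)) :
    ∀ n : ℕ, Prf Ax ((iterE G n p).imp (iterE G n q))
  | 0 => h
  | n + 1 => E_mono (iterE_mono h n)

theorem iterE_mono₂ (h : Prf Ax (p.imp (q.imp r))) :
    ∀ n : ℕ, Prf Ax ((iterE G n p).imp ((iterE G n q).imp (iterE G n r)))
  | 0 => h
  | n + 1 => E_mono₂ (iterE_mono₂ h n)

theorem iterE_box (a : Event) :
    ∀ n : ℕ, Prf Ax ((iterE G n (box a p)).imp (box a (iterE G n p)))
  | 0 => imp_refl _
  | n + 1 => (E_mono (iterE_box a n)).trans (E_box a)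

theorem C_imp_iterE : ∀ n : ℕ, Prf Ax ((C G p).imp (iterE G n p))
  | 0 => (fixC G p).trans (and_left _ _)
  | n + 1 => ((fixC G p).trans (and_right _ _)).trans (E_mono (C_imp_iterE n))

theorem iterBox_mono₂ (a : Event) (h : Prf Ax (p.imp (q.imp r))) :
    ∀ k : ℕ, Prf Ax ((iterBox a k p).imp ((iterBox a k q).imp (iterBox a k r)))
  | 0 => h
  | k + 1 => box_mono₂ a (iterBox_mono₂ a h k)

theorem imp_iterBox_of_imp_box {a : Event} (h : Prf Ax (p.imp (box a p))) :
    ∀ k : ℕ, Prf Ax (p.imp (iterBox a k p))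
  | 0 => imp_refl p
  | k + 1 => h.trans (box_mono a (imp_iterBox_of_imp_box h k))

theorem iterE_add_two_imp_box_iterE_succ (hG : G ≠ []) {a : Event} {p' : Form Atom Agent Event}
    (hEE : Prf Ax ((E G (E G p)).imp (box a (E G q)))) (hp : Prf Ax (p.imp (box a p)))
    (hq : Prf Ax (q.imp (p.imp p'))) (n : ℕ) :
    Prf Ax ((iterE G (n + 2) p).imp (box a (iterE G (n + 1) p'))) := by
  have hlearn : Prf Ax ((iterE G (n + 2) p).imp (box a (iterE G (n + 1) q))) := by
    have h := (iterE_mono (G := G) hEE n).trans (iterE_box a n)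
    simpa only [← iterE_succ'] using h
  have hkeep : Prf Ax ((iterE G (n + 2) p).imp (box a (iterE G (n + 1) p))) :=
    (E_imp_self hG).trans ((iterE_mono hp (n + 1)).trans (iterE_box a (n + 1)))
  exact mp₂_under hlearn hkeep (box_mono₂ a (iterE_mono₂ hq (n + 1)))

theorem iterE_succ_imp_iterBox {a : Event} (P : ℕ → Form Atom Agent Event)
    (hstep : ∀ n j, Prf Ax ((iterE G (n + 2) (P j)).imp (box a (iterE G (n + 1) (P (j + 1)))))) :
    ∀ k : ℕ, Prf Ax ((iterE G (k + 1) (P 0)).imp (iterBox a k (E G (P k))))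
  | 0 => imp_refl _
  | k + 1 => (hstep k 0).trans (box_mono a
      (iterE_succ_imp_iterBox (fun j => P (j + 1)) (fun n j => hstep n (j + 1)) k))

end Form.Prf

open Form Form.Prf in
theorem knows_mud_of_E_lam {Event : Type} {Ax : MForm Event → Prop}
    {G : List ℕ} {i m : ℕ} (hi : i ∈ G)
    (hEQ : Prf Ax ((eps m).iff ((lam m).and (lam (m+1)).not)))
    (hMC3 : Prf Ax ((mud i).imp ((K i (eps (m+1))).imp (K i (mud i))))) :
    Prf Ax ((E G (lam (m+1))).imp
      (((mud i).imp (K i ((eps m).or (eps (m+1))))).imp ((mud i).imp (K i (mud i))))) :=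
  imp_imp_under ((E_imp_K hi).trans
    (K_mono₂ i (resolve_left_of_imp_not ((iff_mp_s13 hEQ).trans (and_right _ _))))) hMC3

open Form.Prf in
theorem concl_general {Event : Type} (Ax : MForm Event → Prop)
    (G : List ℕ) (hG : G ≠ []) (pt st : Event) (m : ℕ)
    (hEQ : ∀ j : ℕ, Form.Prf Ax (Form.iff (eps j) (Form.and (lam j) (Form.not (lam (j+1))))))
    (hMC11 : Form.Prf Ax (Form.imp (Form.box pt Form.tru) (Form.C G (lam 1))))
    (hMC12 : ∀ i ∈ G, Form.Prf Ax (Form.imp (Form.box pt Form.tru)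
      (Form.imp (mud i) (Form.K i (Form.or (eps m) (eps (m+1)))))))
    (hPersMC12 : ∀ i ∈ G, ∀ a : Event,
      Form.Prf Ax (Form.imp
        (Form.imp (mud i) (Form.K i (Form.or (eps m) (eps (m+1)))))
        (Form.box a (Form.imp (mud i) (Form.K i (Form.or (eps m) (eps (m+1))))))))
    (hPers : ∀ j : ℕ, Form.Prf Ax (Form.imp (lam j) (Form.box st (lam j))))
    (hMC2 : ∀ j : ℕ, 1 ≤ j →
      Form.Prf Ax (Form.imp (Form.E G (Form.E G (lam j)))
        (Form.box st (Form.E G (Form.not (eps j))))))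
    (hMC3 : ∀ i ∈ G, Form.Prf Ax (Form.imp (mud i)
      (Form.imp (Form.K i (eps (m+1))) (Form.K i (mud i))))) :
    ∀ i ∈ G, Form.Prf Ax (Form.imp (Form.box pt Form.tru)
      (Form.iterBox st m (Form.imp (mud i) (Form.K i (mud i))))) := by
  intro i hi
  have hstep (n j : ℕ) : Form.Prf Ax ((Form.iterE G (n + 2) (lam (j + 1))).imp
      (Form.box st (Form.iterE G (n + 1) (lam (j + 1 + 1))))) :=
    iterE_add_two_imp_box_iterE_succ hG (hMC2 (j + 1) (Nat.le_add_left 1 j)) (hPers (j + 1))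
      (not_imp_imp_of_and_not_imp (iff_mpr_s13 (hEQ (j + 1)))) n
  have hknows : Form.Prf Ax ((Form.box pt Form.tru).imp
      (Form.iterBox st m (Form.E G (lam (m + 1))))) :=
    (hMC11.trans (C_imp_iterE (m + 1))).trans
      (iterE_succ_imp_iterBox (fun j => lam (j + 1)) hstep m)
  have hsees := (hMC12 i hi).trans (imp_iterBox_of_imp_box (hPersMC12 i hi st) m)
  exact mp₂_under hknows hsees
    (iterBox_mono₂ st (knows_mud_of_E_lam hi (hEQ m) (hMC3 i hi)) m)

/-- (Concl, the Muddy Children Theorem) With m+1 muddy children, for every child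
i in G: ⊢ [¤] TRUE → [*]^m (μ_i → K_i μ_i). -/
theorem concl {Event : Type} (Ax : MForm Event → Prop)
    (G : List ℕ) (hG : G ≠ []) (pt st : Event) (m : ℕ)
    (hEQ : ∀ j : ℕ, Form.Prf Ax (Form.iff (eps j) (Form.and (lam j) (Form.not (lam (j+1))))))
    (hMono : ∀ j : ℕ, Form.Prf Ax (Form.imp (lam (j+1)) (lam j)))
    (hMC11 : Form.Prf Ax (Form.imp (Form.box pt Form.tru) (Form.C G (lam 1))))
    (hMC12 : ∀ i ∈ G, Form.Prf Ax (Form.imp (Form.box pt Form.tru)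
      (Form.imp (mud i) (Form.K i (Form.or (eps m) (eps (m+1)))))))
    (hPersMC12 : ∀ i ∈ G, ∀ a : Event,
      Form.Prf Ax (Form.imp
        (Form.imp (mud i) (Form.K i (Form.or (eps m) (eps (m+1)))))
        (Form.box a (Form.imp (mud i) (Form.K i (Form.or (eps m) (eps (m+1))))))))
    (hPers : ∀ j : ℕ, Form.Prf Ax (Form.imp (lam j) (Form.box st (lam j))))
    (hMC2 : ∀ j : ℕ, 1 ≤ j →
      Form.Prf Ax (Form.imp (Form.E G (Form.E G (lam j)))
        (Form.box st (Form.E G (Form.not (eps j))))))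
    (hMC3 : ∀ i ∈ G, Form.Prf Ax (Form.imp (mud i)
      (Form.imp (Form.K i (eps (m+1))) (Form.K i (mud i))))) :
    ∀ i ∈ G, Form.Prf Ax (Form.imp (Form.box pt Form.tru)
      (Form.iterBox st m (Form.imp (mud i) (Form.K i (mud i))))) :=
  concl_general Ax G hG pt st m hEQ hMC11 hMC12 hPersMC12 hPers hMC2 hMC3
end
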